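/- Let R be a finite set of places of F_q(T) and define g(X^R) = 1 + (1/(q²-1))·∏_{x∈R}(q_x - 1) - (q/(q+1))·2^{#R-1}·Odd(R), where q_x = q^{deg x} and Odd(R) = 1 if all places in R have odd degree and 0 otherwise. Then g(X^R) is even if and only if either (1) q is even, or (2) q is odd, #R = 2, and both places in R have odd degree. -/

import Mathlib

/-!
Clearing denominators, `G = g - 1` satisfies
`G (q² - 1) = ∏ (q^{d_x} - 1) - q (q - 1) 2^{n-1} Odd(R)` with `n = #R`. If `q` is even, everything is read off modulo 2: the right side is odd, so `g` is
even. If `q` is odd and some `d_x` is even, then `q² - 1 ∣ q^{d_x} - 1` while every other factor is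
even, so `G` is even. If `q` is odd and all `d_x` are odd, then `q^{d_x} - 1 = (q - 1) S_x` with
`S_x ≡ 1 (mod q + 1)`, and after cancelling `q² - 1` one finds `G = -1 + (q - 1) k` when `n = 2`,
while for `n ≥ 4` the high powers of 2 in `(q - 1)^{n-1}` and `2^{n-1}` make `G` even.
-/

open Finset

lemma sub_one_mul_sq_sub_one_eq_of_genus {q g n : ℕ} (hq : 2 ≤ q) {P E : ℤ}
    (hg : (g : ℚ) = 1 + 1 / ((q : ℚ) ^ 2 - 1) * P - (q / (q + 1)) * 2 ^ n * E) :
    ((g : ℤ) - 1) * ((q : ℤ) ^ 2 - 1) = P - q * ((q - 1) * 2 ^ n * E) := by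
  have hq' : (2 : ℚ) ≤ q := by exact_mod_cast hq
  have hsq : (q : ℚ) ^ 2 - 1 ≠ 0 := by nlinarith
  have hq1 : (q : ℚ) + 1 ≠ 0 := by positivity
  have : ((g : ℚ) - 1) * ((q : ℚ) ^ 2 - 1) = P - q * ((q - 1) * 2 ^ n * E) := by
    rw [hg]
    field_simp
    ring
  exact_mod_cast this

lemma geom_sum_modEq_one_of_odd (q : ℤ) {d : ℕ} (hd : Odd d) :
    ∑ i ∈ range d, q ^ i ≡ 1 [ZMOD q + 1] := by
  have hq : q ≡ -1 [ZMOD q + 1] := (Int.modEq_iff_dvd.mpr (by simp)).symm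
  calc ∑ i ∈ range d, q ^ i ≡ ∑ i ∈ range d, (-1) ^ i [ZMOD q + 1] :=
        Int.ModEq.sum fun i _ => hq.pow i
    _ = 1 := by rw [neg_one_geom_sum, if_neg (Nat.not_even_iff_odd.mpr hd)]

section ProdPowSubOne

variable {ι : Type*} {s : Finset ι} {d : ι → ℕ} {q : ℤ}

lemma odd_prod_pow_sub_one (hq : Even q) (hd : ∀ i ∈ s, d i ≠ 0) :
    Odd (∏ i ∈ s, (q ^ d i - 1)) :=
  prod_induction _ Odd (fun _ _ => Odd.mul) odd_one fun i hi =>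
    (hq.pow_of_ne_zero (hd i hi)).sub_odd odd_one

lemma two_mul_sq_sub_one_dvd_prod_pow_sub_one [DecidableEq ι] (hq : Odd q) (hs : 1 < #s)
    {i : ι} (hi : i ∈ s) (hdi : Even (d i)) :
    2 * (q ^ 2 - 1) ∣ ∏ k ∈ s, (q ^ d k - 1) := by
  obtain ⟨j, hj, hij⟩ := exists_mem_ne hs i
  obtain ⟨t, ht⟩ := hdi
  have h_i : q ^ 2 - 1 ∣ q ^ d i - 1 := by
    simpa [ht, ← two_mul] using pow_one_sub_dvd_pow_mul_sub_one q 2 t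
  have h_j : 2 ∣ ∏ k ∈ s.erase i, (q ^ d k - 1) :=
    (even_iff_two_dvd.mp (hq.pow.sub_odd odd_one)).trans
      (dvd_prod_of_mem _ (mem_erase.mpr ⟨hij, hj⟩))
  rw [← mul_prod_erase s _ hi, mul_comm 2]
  exact mul_dvd_mul h_i h_j

lemma exists_prod_pow_sub_one_eq_of_odd (hd : ∀ i ∈ s, Odd (d i)) :
    ∃ S, S ≡ 1 [ZMOD q + 1] ∧ ∏ i ∈ s, (q ^ d i - 1) = (q - 1) ^ #s * S := by
  refine ⟨∏ i ∈ s, ∑ k ∈ range (d i), q ^ k,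
    Int.ModEq.prod_one fun i hi => geom_sum_modEq_one_of_odd q (hd i hi), ?_⟩
  simp_rw [← geom_sum_mul, prod_mul_distrib, prod_const, mul_comm]

end ProdPowSubOne

lemma odd_iff_of_mul_add_one_eq {q G S : ℤ} {m : ℕ} (hq : Odd q) (hq0 : 0 < q) (hm : Odd m)
    (hS : S ≡ 1 [ZMOD q + 1]) (h : G * (q + 1) = (q - 1) ^ m * S - q * 2 ^ m) :
    Odd G ↔ m = 1 := by
  obtain ⟨k, hk⟩ := Int.modEq_iff_dvd.mp hS.symm
  obtain rfl : S = 1 + (q + 1) * k := by linarith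
  obtain ⟨r, rfl⟩ := hq
  have hq1 : 2 * r + 1 + 1 ≠ 0 := by omega
  obtain ⟨j, rfl⟩ := hm
  rcases j with _ | j
  · have hG : G = 2 * (r * k - 1) + 1 :=
      mul_right_cancel₀ hq1 (by linear_combination h)
    exact iff_of_true ⟨_, hG⟩ rfl
  · -- `(q - 1)^m - q 2^m = 2^m (r^m + 1) - 2^m (q + 1)` and `q + 1 = 2 (r + 1)`
    obtain ⟨w, hw⟩ : r + 1 ∣ r ^ (2 * (j + 1) + 1) + 1 := by
      simpa using Odd.add_dvd_pow_add_pow r 1 ⟨j + 1, rfl⟩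
    have hG : G = 2 * (2 ^ (2 * j + 1) * (w - 2) + 2 ^ (2 * j + 2) * r ^ (2 * j + 3) * k) :=
      mul_right_cancel₀ hq1 (by linear_combination h + 2 ^ (2 * j + 3) * hw)
    exact iff_of_false (Int.not_odd_iff_even.mpr (hG ▸ even_two_mul _)) (by omega)

section GenusIdentity

variable {ι : Type*} {s : Finset ι} {d : ι → ℕ} {q G : ℤ}

lemma odd_of_mul_sq_sub_one_eq_of_even {X : ℤ} (hq : Even q) (hd : ∀ i ∈ s, d i ≠ 0)
    (h : G * (q ^ 2 - 1) = ∏ i ∈ s, (q ^ d i - 1) - q * X) : Odd G :=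
  Int.Odd.of_mul_left (h ▸ (odd_prod_pow_sub_one hq hd).sub_even (hq.mul_right X))

lemma even_of_mul_sq_sub_one_eq_of_even_mem [DecidableEq ι] (hq : Odd q) (hq2 : 2 ≤ q)
    (hs : 1 < #s) {i : ι} (hi : i ∈ s) (hdi : Even (d i))
    (h : G * (q ^ 2 - 1) = ∏ i ∈ s, (q ^ d i - 1)) : Even G := by
  have hdvd := two_mul_sq_sub_one_dvd_prod_pow_sub_one hq hs hi hdi
  rw [← h, mul_comm G, mul_comm 2] at hdvd
  exact even_iff_two_dvd.mpr ((mul_dvd_mul_iff_left (show q ^ 2 - 1 ≠ 0 by nlinarith)).mp hdvd)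

lemma odd_iff_card_eq_two_of_forall_odd (hq : Odd q) (hq2 : 2 ≤ q) (hs : Even #s)
    (hs0 : #s ≠ 0) (hd : ∀ i ∈ s, Odd (d i))
    (h : G * (q ^ 2 - 1) = ∏ i ∈ s, (q ^ d i - 1) - q * ((q - 1) * 2 ^ (#s - 1))) :
    Odd G ↔ #s = 2 := by
  obtain ⟨S, hS, hP⟩ := exists_prod_pow_sub_one_eq_of_odd (q := q) hd
  obtain ⟨m, hm⟩ := Nat.exists_eq_add_one_of_ne_zero hs0
  rw [hP, hm, Nat.add_sub_cancel] at h
  rw [hm] at hs ⊢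
  have hm_odd : Odd m := Nat.not_even_iff_odd.mp (Nat.even_add_one.mp hs)
  have h' : G * (q + 1) = (q - 1) ^ m * S - q * 2 ^ m :=
    mul_right_cancel₀ (show q - 1 ≠ 0 by omega) (by linear_combination h)
  rw [odd_iff_of_mul_add_one_eq hq (by omega) hm_odd hS h']
  omega

end GenusIdentity

/-- Parity of the genus of `X^R`: with
`g(X^R) = 1 + (1/(q²-1))·∏_{x∈R}(q_x - 1) - (q/(q+1))·2^{#R-1}·Odd(R)`,
where `q_x = q^{deg x}` and `Odd(R) = 1` iff all degrees in `R` are odd, the genus is even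
iff `q` is even, or `q` is odd, `#R = 2` and both places in `R` have odd degree. -/
theorem genus_even_iff {α : Type*} (q : ℕ) (hq : ∃ p n : ℕ, p.Prime ∧ 0 < n ∧ q = p ^ n)
    (R : Finset α) (deg : α → ℕ) (hcard : 2 ≤ R.card) (hcard2 : Even R.card)
    (hdeg : ∀ x ∈ R, 1 ≤ deg x) (g : ℕ)
    (hg : (g : ℚ) = 1 + (1 / ((q : ℚ) ^ 2 - 1)) * ∏ x ∈ R, ((q : ℚ) ^ deg x - 1)
        - ((q : ℚ) / ((q : ℚ) + 1)) * 2 ^ (R.card - 1) *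
          (if ∀ x ∈ R, Odd (deg x) then 1 else 0)) :
    Even g ↔ (Even q ∨ (Odd q ∧ R.card = 2 ∧ ∀ x ∈ R, Odd (deg x))) := by
  classical
  have hq2 : 2 ≤ q := by
    obtain ⟨p, n, hp, hn, rfl⟩ := hq
    exact Nat.one_lt_pow hn.ne' hp.one_lt
  have hq2' : (2 : ℤ) ≤ q := by exact_mod_cast hq2
  have key := sub_one_mul_sq_sub_one_eq_of_genus hq2 (P := ∏ x ∈ R, ((q : ℤ) ^ deg x - 1))
    (E := if ∀ x ∈ R, Odd (deg x) then 1 else 0) (by push_cast; exact hg)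
  rw [← Int.even_coe_nat, ← odd_sub_one]
  rcases Nat.even_or_odd q with hq_even | hq_odd
  · exact iff_of_true (odd_of_mul_sq_sub_one_eq_of_even (by exact_mod_cast hq_even)
      (fun x hx => Nat.one_le_iff_ne_zero.mp (hdeg x hx)) key) (Or.inl hq_even)
  have hq_odd' : Odd (q : ℤ) := by exact_mod_cast hq_odd
  simp only [Nat.not_even_iff_odd.mpr hq_odd, hq_odd, true_and, false_or]
  by_cases hall : ∀ x ∈ R, Odd (deg x)
  · rw [if_pos hall, mul_one] at key
    rw [and_iff_left hall]
    exact odd_iff_card_eq_two_of_forall_odd hq_odd' hq2' hcard2 (by omega) hall key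
  · rw [if_neg hall, mul_zero, mul_zero, sub_zero] at key
    obtain ⟨x, hx, hx_not_odd⟩ := not_forall₂.mp hall
    exact iff_of_false (Int.not_odd_iff_even.mpr (even_of_mul_sq_sub_one_eq_of_even_mem hq_odd'
      hq2' hcard hx (Nat.not_odd_iff_even.mp hx_not_odd) key))
      fun h => hx_not_odd (h.2 x hx)
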